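/- Consider the chores-only lexicographic instance with two agents N = {1,2} and three chores M = {o1,o2,o3}, with importance orders o1 ⊳_1 o2 ⊳_1 o3 and o1 ⊳_2 o3 ⊳_2 o2. Then no complete allocation of M is both MMS and rank-maximal. Hence an MMS and rank-maximal allocation of chores can fail to exist under lexicographic preferences. -/

import Mathlib

attribute [local instance 10] Classical.propDecidable

/-- A lexicographic mixed instance: each agent `i` has a set `G i` of goods
(its complement being the chores `C i`) and a strict linear importance order
`⊳_i` on the items, encoded as a linear order where larger means more important. -/
structure LexInstance (N M : Type) [Fintype N] [Fintype M] [DecidableEq M] where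
  G : N → Finset M
  ord : N → LinearOrder M

namespace LexInstance

variable {N M : Type} [Fintype N] [Fintype M] [DecidableEq M]

/-- `inst.imp i a b` means `a ⊳_i b` : `a` is more important than `b` for agent `i`. -/
def imp (inst : LexInstance N M) (i : N) (a b : M) : Prop := (inst.ord i).lt b a

/-- The chores of agent `i`. -/
def C (inst : LexInstance N M) (i : N) : Finset M := (inst.G i)ᶜ

/-- Strict lexicographic preference `X ≻_i Y`. -/
def SPref (inst : LexInstance N M) (i : N) (X Y : Finset M) : Prop :=
  (∃ g ∈ inst.G i ∩ (X \ Y), ∀ o ∈ Y ∩ inst.G i, inst.imp i o g → o ∈ X) ∨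
  (∃ c ∈ inst.C i ∩ (Y \ X), ∀ o ∈ X ∩ inst.C i, inst.imp i o c → o ∈ Y)

/-- Weak lexicographic preference `X ⪰_i Y`. -/
def WPref (inst : LexInstance N M) (i : N) (X Y : Finset M) : Prop :=
  inst.SPref i X Y ∨ X = Y

/-- A (complete) allocation: pairwise disjoint bundles whose union is all of `M`. -/
def IsAllocation (_inst : LexInstance N M) (A : N → Finset M) : Prop :=
  (∀ i j, i ≠ j → Disjoint (A i) (A j)) ∧ ∀ o : M, ∃ i, o ∈ A i

/-- Pareto optimality of a (complete) allocation. -/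
def ParetoOptimal (inst : LexInstance N M) (A : N → Finset M) : Prop :=
  ¬ ∃ B : N → Finset M, inst.IsAllocation B ∧
      (∀ i, inst.WPref i (B i) (A i)) ∧ ∃ h, inst.SPref h (B h) (A h)

/-- The item agent `i` picks from the remaining set `R`: its `⊳_i`-greatest
remaining good if there is one, and otherwise the `⊳_i`-least remaining item. -/
noncomputable def pickOne (inst : LexInstance N M) (i : N) (R : Finset M)
    (h : R.Nonempty) : M :=
  if hg : (R ∩ inst.G i).Nonempty then @Finset.max' M (inst.ord i) (R ∩ inst.G i) hg
  else @Finset.min' M (inst.ord i) R h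

/-- Run the picking procedure along a sequence of agents, starting from the
remaining items `R`; returns the resulting bundles. -/
noncomputable def runPick (inst : LexInstance N M) : List N → Finset M → N → Finset M
  | [], _ => fun _ => ∅
  | i :: rest, R =>
    if h : R.Nonempty then
      fun j =>
        runPick inst rest (R.erase (inst.pickOne i R h)) j ∪
          (if j = i then {inst.pickOne i R h} else ∅)
    else fun _ => ∅

/-- An allocation is sequencible if it is produced by some picking sequence of
length `|M|` starting from all items. -/
def Sequencible (inst : LexInstance N M) (A : N → Finset M) : Prop :=
  ∃ s : List N, s.length = Fintype.card M ∧ inst.runPick s Finset.univ = A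

/-- A chores-only instance: every item is a chore for every agent. -/
def ChoresOnly (inst : LexInstance N M) : Prop := ∀ i, inst.G i = ∅

/-- Envy-freeness up to any item. -/
def EFX (inst : LexInstance N M) (A : N → Finset M) : Prop :=
  ∀ i h : N,
    (∀ o ∈ A h ∩ inst.G i, inst.WPref i (A i) ((A h).erase o)) ∧
    (∀ o ∈ A i ∩ inst.C i, inst.WPref i ((A i).erase o) (A h))

/-- Envy-freeness up to any chore. -/
def EFXc (inst : LexInstance N M) (A : N → Finset M) : Prop :=
  ∀ i h : N, ∀ o ∈ A i ∩ inst.C i, inst.WPref i ((A i).erase o) (A h)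

/-- Envy-freeness up to one item. -/
def EF1 (inst : LexInstance N M) (A : N → Finset M) : Prop :=
  ∀ i h : N, ((A i ∩ inst.C i) ∪ (A h ∩ inst.G i)).Nonempty →
    ∃ o ∈ (A i ∩ inst.C i) ∪ (A h ∩ inst.G i),
      inst.WPref i (A i) ((A h).erase o) ∨ inst.WPref i ((A i).erase o) (A h)

/-- `A` gives every agent at least its maximin share: for every partition `P`
of the items into `n` bundles, agent `i` weakly prefers `A i` to some bundle of
`P` (hence to the `⪰_i`-least bundle of `P`). -/
def MMSfair (inst : LexInstance N M) (A : N → Finset M) : Prop :=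
  ∀ i, ∀ P : N → Finset M, inst.IsAllocation P → ∃ j, inst.WPref i (A i) (P j)

/-- `B` is the maximin share `MMS_i` of agent `i`: `B` is the `⪰_i`-least bundle
of some partition of `M` into `n` bundles, and every such partition contains a
bundle to which `B` is weakly preferred. -/
def IsMMSBundle (inst : LexInstance N M) (i : N) (B : Finset M) : Prop :=
  (∃ P : N → Finset M, inst.IsAllocation P ∧ (∃ j, P j = B) ∧
      ∀ j, inst.WPref i (P j) B) ∧
  (∀ P : N → Finset M, inst.IsAllocation P → ∃ j, inst.WPref i B (P j))

/-- The `k`-th (0-indexed) `⊳_i`-greatest good of agent `i`, if any. -/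
noncomputable def kthGood (inst : LexInstance N M) (i : N) (k : ℕ) : Option M :=
  letI : LinearOrder M := inst.ord i
  (((inst.G i).sort (· ≤ ·)).reverse)[k]?

/-- The `k`-th (0-indexed) `⊳_i`-least chore of agent `i`, if any. -/
noncomputable def kthChore (inst : LexInstance N M) (i : N) (k : ℕ) : Option M :=
  letI : LinearOrder M := inst.ord i
  ((inst.C i).sort  (· ≤ ·))[k]?

/-- Number of agents receiving their `k`-th (0-indexed) greatest good. -/
noncomputable def nPlus (inst : LexInstance N M) (A : N → Finset M) (k : ℕ) : ℕ :=
  (Finset.univ.filter fun i => (inst.kthGood i k).elim False (· ∈ A i)).card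

/-- Number of agents receiving their `k`-th (0-indexed) least chore. -/
noncomputable def nMinus (inst : LexInstance N M) (A : N → Finset M) (k : ℕ) : ℕ :=
  (Finset.univ.filter fun i => (inst.kthChore i k).elim False (· ∈ A i)).card

/-- The rank signature `(n_1^+, …, n_m^+, n_1^-, …, n_m^-)` of an allocation. -/
noncomputable def signature (inst : LexInstance N M) (A : N → Finset M) : List ℕ :=
  ((List.range (Fintype.card M)).map fun k => inst.nPlus A k) ++
    ((List.range (Fintype.card M)).map fun k => inst.nMinus A k)

/-- Rank-maximality: the signature is lexicographically maximal over allocations. -/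
def RankMaximal (inst : LexInstance N M) (A : N → Finset M) : Prop :=
  inst.IsAllocation A ∧ ∀ B : N → Finset M, inst.IsAllocation B →
    ¬ List.Lex (· < ·) (inst.signature A) (inst.signature B)

end LexInstance

/-- The set of the `k` greatest (most important) elements of `S` under `L`. -/
def topK {M : Type} [DecidableEq M] (L : LinearOrder M) (S : Finset M) (k : ℕ) :
    Finset M :=
  letI := L
  S.filter fun o => (S.filter fun o' => o < o').card < k

/-- Build a linear order on `Fin m` from an injective ranking function
(larger value = more important). -/
def mkOrd {m : ℕ} (f : Fin m → ℕ) (hf : Function.Injective f) : LinearOrder (Fin m) :=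
  LinearOrder.lift' f hf

/-- The chores-only instance with two agents and three chores `0,1,2` standing
for `o1,o2,o3`, with importance orders `o1 ⊳₁ o2 ⊳₁ o3` and `o1 ⊳₂ o3 ⊳₂ o2`. -/
def inst16 : LexInstance (Fin 2) (Fin 3) where
  G := fun _ => ∅
  ord := ![mkOrd ![2, 1, 0] (by decide), mkOrd ![2, 0, 1] (by decide)]

/-! In a chores-only instance, an agent holding its most important chore `o` weakly prefers its
bundle to a bundle of the partition `{o}, M \ {o}` only if its bundle is exactly `{o}`. Since `o1`
is most important for both agents, an MMS allocation is `({o1}, {o2, o3})` or `({o2, o3}, {o1})`.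
Either way only one agent receives its least important chore (`o3` for agent 1, `o2` for agent 2),
while `({o1, o3}, {o2})` gives both agents theirs, so no MMS allocation is rank-maximal. -/

namespace LexInstance

variable {N M : Type} [Fintype N] [Fintype M] [DecidableEq M]
  {inst : LexInstance N M} {i : N}

theorem isAllocation_fiber (owner : M → N) :
    inst.IsAllocation fun j => Finset.univ.filter fun o => owner o = j := by
  refine ⟨fun j k hjk => Finset.disjoint_left.2 ?_, fun o => ⟨owner o, by simp⟩⟩
  simp only [Finset.mem_filter, Finset.mem_univ, true_and]
  rintro o rfl rfl
  exact hjk rfl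

theorem WPref.eq_of_subset (hG : inst.G i = ∅) {X Y : Finset M} (h : inst.WPref i X Y)
    (hYX : Y ⊆ X) : X = Y := by
  rcases h with (⟨g, hg, -⟩ | ⟨c, hc, -⟩) | h
  · simp [hG] at hg
  · simp only [Finset.mem_inter, Finset.mem_sdiff] at hc
    exact absurd (hYX hc.2.1) hc.2.2
  · exact h

theorem not_wPref_of_mem_of_notMem (hG : inst.G i = ∅) {X Y : Finset M} {o : M}
    (hoX : o ∈ X) (hoY : o ∉ Y) (himp : ∀ o' ∈ Y, inst.imp i o o') :
    ¬ inst.WPref i X Y := by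
  rintro ((⟨g, hg, -⟩ | ⟨c, hc, hmin⟩) | rfl)
  · simp [hG] at hg
  · simp only [Finset.mem_inter, Finset.mem_sdiff] at hc
    exact hoY (hmin o (Finset.mem_inter.2 ⟨hoX, by simp [C, hG]⟩) (himp c hc.2.1))
  · exact hoY hoX

theorem MMSfair.eq_singleton_of_mem [Nontrivial N] {A : N → Finset M} (hA : inst.MMSfair A)
    (hG : inst.G i = ∅) {o : M} (himp : ∀ o' ≠ o, inst.imp i o o') (ho : o ∈ A i) :
    A i = {o} := by
  obtain ⟨j₁, j₂, hne⟩ := exists_pair_ne N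
  let owner : M → N := fun o' => if o' = o then j₁ else j₂
  obtain ⟨j, hj⟩ := hA i _ (isAllocation_fiber (inst := inst) owner)
  by_cases hjo : j = j₁
  · have hP : (Finset.univ.filter fun o' => owner o' = j) = {o} := by
      ext o'
      by_cases h : o' = o <;> simp [owner, h, hjo, Ne.symm hne]
    rw [hP] at hj
    exact hj.eq_of_subset hG (Finset.singleton_subset_iff.2 ho)
  · refine absurd hj (not_wPref_of_mem_of_notMem hG ho (by simp [owner, Ne.symm hjo]) ?_)
    intro o' ho'
    exact himp o' fun h => by simp [owner, h, Ne.symm hjo] at ho'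

theorem kthGood_eq_none (hG : inst.G i = ∅) (k : ℕ) : inst.kthGood i k = none := by
  simp [kthGood, hG]

theorem nPlus_eq_zero (hc : inst.ChoresOnly) (A : N → Finset M) (k : ℕ) :
    inst.nPlus A k = 0 := by
  simp [nPlus, kthGood_eq_none (hc _)]

theorem kthChore_zero_eq_some {c : M} (hc : c ∈ inst.C i)
    (hmin : ∀ o ∈ inst.C i, o ≠ c → inst.imp i o c) : inst.kthChore i 0 = some c := by
  let : LinearOrder M := inst.ord i
  have hne : (inst.C i).Nonempty := ⟨c, hc⟩
  have hlen : 0 < ((inst.C i).sort (· ≤ ·)).length := by simpa using hne.card_pos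
  have hc_min : (inst.C i).min' hne = c :=
    le_antisymm ((inst.C i).min'_le c hc) (Finset.le_min' _ _ _ fun o ho =>
      (eq_or_ne o c).elim (fun h => h.ge) fun h => (hmin o ho h).le)
  simp only [kthChore, List.getElem?_eq_getElem hlen, Finset.sorted_zero_eq_min', hc_min]

theorem nMinus_zero_eq_card {c : N → M} (hc : ∀ i, inst.kthChore i 0 = some (c i))
    (A : N → Finset M) : inst.nMinus A 0 = (Finset.univ.filter fun i => c i ∈ A i).card := by
  simp [nMinus, hc]

theorem signature_of_choresOnly (hc : inst.ChoresOnly) (A : N → Finset M) :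
    inst.signature A = List.replicate (Fintype.card M) 0 ++
      (List.range (Fintype.card M)).map (inst.nMinus A) := by
  simp [signature, nPlus_eq_zero hc, List.map_const']

theorem RankMaximal.nMinus_zero_le [Nonempty M] (hc : inst.ChoresOnly) {A B : N → Finset M}
    (hA : inst.RankMaximal A) (hB : inst.IsAllocation B) : inst.nMinus B 0 ≤ inst.nMinus A 0 := by
  refine le_of_not_gt fun hlt => hA.2 B hB ?_
  obtain ⟨m, hm⟩ := Nat.exists_eq_succ_of_ne_zero (Fintype.card_ne_zero (α := M))
  rw [signature_of_choresOnly hc, signature_of_choresOnly hc, hm, List.range_succ_eq_map]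
  exact List.Lex.append_left _ (List.Lex.rel hlt) _

theorem IsAllocation.eq_compl_of_ne {inst : LexInstance (Fin 2) M} {A : Fin 2 → Finset M}
    (hA : inst.IsAllocation A) {i j : Fin 2} (hij : i ≠ j) : A j = (A i)ᶜ := by
  ext o
  rw [Finset.mem_compl]
  refine ⟨fun hj hi => Finset.disjoint_left.1 (hA.1 i j hij) hi hj, fun hi => ?_⟩
  obtain ⟨k, hk⟩ := hA.2 o
  have hki : k ≠ i := by rintro rfl; exact hi hk
  obtain rfl : k = j := by omega
  exact hk

end LexInstance

theorem mkOrd_lt_iff {m : ℕ} {f : Fin m → ℕ} {hf : Function.Injective f} {a b : Fin m} :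
    (mkOrd f hf).lt a b ↔ f a < f b :=
  Iff.rfl

theorem inst16_choresOnly : inst16.ChoresOnly := fun _ => rfl

theorem inst16_imp_zero (i : Fin 2) : ∀ o ≠ 0, inst16.imp i 0 o := by
  intro o ho
  fin_cases i <;> fin_cases o <;> first | exact absurd rfl ho | exact mkOrd_lt_iff.2 (by decide)

theorem inst16_kthChore_zero (i : Fin 2) : inst16.kthChore i 0 = some (![2, 1] i) := by
  refine LexInstance.kthChore_zero_eq_some (by simp [LexInstance.C, inst16]) fun o _ ho => ?_
  fin_cases i <;> fin_cases o <;> first | exact absurd rfl ho | exact mkOrd_lt_iff.2 (by decide)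

theorem inst16_nMinus_zero (A : Fin 2 → Finset (Fin 3)) :
    inst16.nMinus A 0 = (if 2 ∈ A 0 then 1 else 0) + (if 1 ∈ A 1 then 1 else 0) := by
  rw [LexInstance.nMinus_zero_eq_card inst16_kthChore_zero, Finset.card_filter, Fin.sum_univ_two]
  rfl

/-- no complete allocation of this chores-only instance is both
MMS and rank-maximal. -/
theorem no_mms_rm_allocation :
    ∀ A : Fin 2 → Finset (Fin 3), inst16.IsAllocation A →
      ¬ (inst16.MMSfair A ∧ inst16.RankMaximal A) := by
  rintro A hA ⟨hMMS, hRM⟩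
  have hB : inst16.IsAllocation ![{0, 2}, {1}] := by constructor <;> decide
  have hle := hRM.nMinus_zero_le inst16_choresOnly hB
  rw [inst16_nMinus_zero, inst16_nMinus_zero] at hle
  have hsingle (i : Fin 2) (hi : 0 ∈ A i) : A i = {0} :=
    hMMS.eq_singleton_of_mem rfl (inst16_imp_zero i) hi
  rcases Fin.exists_fin_two.1 (hA.2 0) with h0 | h1
  · rw [hA.eq_compl_of_ne zero_ne_one, hsingle 0 h0] at hle
    exact absurd hle (by decide)
  · rw [hA.eq_compl_of_ne one_ne_zero, hsingle 1 h1] at hle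
    exact absurd hle (by decide)
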